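/- Under the assumption that $E[Z \mid X] = p(X)$ a.s. with $0 < p(X) < 1$, and with $\kappa, \kappa_1, \kappa_0$ defined via $\kappa_1 = D\frac{Z-p(X)}{p(X)(1-p(X))}$, $\kappa_0 = (1-D)\frac{(1-Z)-(1-p(X))}{p(X)(1-p(X))}$, $\kappa = 1 - \frac{D(1-Z)}{1-p(X)} - \frac{(1-D)Z}{p(X)}$, it holds that $E[\kappa] = E[\kappa_1] = E[\kappa_0]$, provided these expectations exist. -/

import Mathlib

open MeasureTheory

lemma aux_int_mul_sub_eq_zero {Ω : Type*} {mΩ : MeasurableSpace Ω}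
    {μ : Measure Ω} [IsProbabilityMeasure μ]
    {m : MeasurableSpace Ω} (hm : m ≤ mΩ)
    {Z p g : Ω → ℝ}
    (hZint : Integrable Z μ)
    (hpmeas : Measurable[m] p)
    (hp : ∀ᵐ ω ∂μ, 0 < p ω ∧ p ω < 1)
    (hcond : μ[Z|m] =ᵐ[μ] p)
    (hg : StronglyMeasurable[m] g)
    (hint : Integrable (fun ω => g ω * (Z ω - p ω)) μ) :
    ∫ ω, g ω * (Z ω - p ω) ∂μ = 0 := by
  have hpint : Integrable p μ := by
    refine Integrable.mono' (integrable_const (1 : ℝ))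
      ((hpmeas.mono hm le_rfl).aestronglyMeasurable) ?_
    filter_upwards [hp] with ω hω
    rw [Real.norm_eq_abs, abs_of_pos hω.1]
    exact hω.2.le
  have hZp : Integrable (fun ω => Z ω - p ω) μ := hZint.sub hpint
  have hcond0 : μ[fun ω => Z ω - p ω|m] =ᵐ[μ] fun _ => (0 : ℝ) := by
    have h1 : μ[fun ω => Z ω - p ω|m] =ᵐ[μ] μ[Z|m] - μ[p|m] := condExp_sub hZint hpint m
    have h2 : μ[p|m] = p :=
      condExp_of_stronglyMeasurable hm hpmeas.stronglyMeasurable hpint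
    filter_upwards [h1, hcond] with ω h1ω hcω
    simp only [h1ω, Pi.sub_apply, h2, hcω, sub_self]
  have hmul : μ[fun ω => g ω * (Z ω - p ω)|m]
      =ᵐ[μ] fun ω => g ω * (μ[fun ω => Z ω - p ω|m]) ω :=
    condExp_mul_of_stronglyMeasurable_left hg hint hZp
  calc ∫ ω, g ω * (Z ω - p ω) ∂μ
      = ∫ ω, (μ[fun ω => g ω * (Z ω - p ω)|m]) ω ∂μ := (integral_condExp hm).symm
    _ = 0 := by
        rw [integral_congr_ae (hmul.trans ?_), integral_zero]
        · filter_upwards [hcond0] with ω hω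
          simp [hω]

/-- E[κ] = E[κ₁] = E[κ₀] when E[Z|X] = p(X) a.s. -/
theorem kappa_expectations_equal {Ω : Type*} {mΩ : MeasurableSpace Ω}
    {μ : Measure Ω} [IsProbabilityMeasure μ]
    {m : MeasurableSpace Ω} (hm : m ≤ mΩ)
    (Z D p : Ω → ℝ)
    (hZ01 : ∀ᵐ ω ∂μ, Z ω = 0 ∨ Z ω = 1)
    (hD01 : ∀ᵐ ω ∂μ, D ω = 0 ∨ D ω = 1)
    (hZint : Integrable Z μ)
    (hpmeas : Measurable[m] p)
    (hp : ∀ᵐ ω ∂μ, 0 < p ω ∧ p ω < 1)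
    (hcond : μ[Z|m] =ᵐ[μ] p)
    (hintκ : Integrable (fun ω => 1 - D ω * (1 - Z ω) / (1 - p ω) - (1 - D ω) * Z ω / p ω) μ)
    (hintκ1 : Integrable (fun ω => D ω * (Z ω - p ω) / (p ω * (1 - p ω))) μ)
    (hintκ0 : Integrable (fun ω => (1 - D ω) * ((1 - Z ω) - (1 - p ω)) / (p ω * (1 - p ω))) μ) :
    (∫ ω, (1 - D ω * (1 - Z ω) / (1 - p ω) - (1 - D ω) * Z ω / p ω) ∂μ)
      = (∫ ω, D ω * (Z ω - p ω) / (p ω * (1 - p ω)) ∂μ) ∧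
    (∫ ω, D ω * (Z ω - p ω) / (p ω * (1 - p ω)) ∂μ)
      = (∫ ω, (1 - D ω) * ((1 - Z ω) - (1 - p ω)) / (p ω * (1 - p ω)) ∂μ) := by
  -- first difference
  have hae1 : (fun ω => (1 - D ω * (1 - Z ω) / (1 - p ω) - (1 - D ω) * Z ω / p ω)
        - D ω * (Z ω - p ω) / (p ω * (1 - p ω)))
      =ᵐ[μ] fun ω => (-(p ω)⁻¹) * (Z ω - p ω) := by
    filter_upwards [hZ01, hD01, hp] with ω hZω hDω hpω
    have h0 : p ω ≠ 0 := ne_of_gt hpω.1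
    have h1 : 1 - p ω ≠ 0 := by linarith [hpω.2]
    rcases hDω with hD | hD <;> rcases hZω with hZ | hZ <;>
      simp only [hD, hZ] <;> field_simp <;> ring
  have hae2 : (fun ω => D ω * (Z ω - p ω) / (p ω * (1 - p ω))
        - (1 - D ω) * ((1 - Z ω) - (1 - p ω)) / (p ω * (1 - p ω)))
      =ᵐ[μ] fun ω => (p ω * (1 - p ω))⁻¹ * (Z ω - p ω) := by
    filter_upwards [hp] with ω hpω
    have h0 : p ω ≠ 0 := ne_of_gt hpω.1
    have h1 : 1 - p ω ≠ 0 := by linarith [hpω.2]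
    field_simp
    ring
  have hg1 : StronglyMeasurable[m] (fun ω => -(p ω)⁻¹) :=
    (hpmeas.inv.neg).stronglyMeasurable
  have hg2 : StronglyMeasurable[m] (fun ω => (p ω * (1 - p ω))⁻¹) :=
    ((hpmeas.mul (hpmeas.const_sub 1)).inv).stronglyMeasurable
  have hint1 : Integrable (fun ω => (-(p ω)⁻¹) * (Z ω - p ω)) μ :=
    (hintκ.sub hintκ1).congr hae1
  have hint2 : Integrable (fun ω => (p ω * (1 - p ω))⁻¹ * (Z ω - p ω)) μ :=
    (hintκ1.sub hintκ0).congr hae2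
  have hz1 := aux_int_mul_sub_eq_zero hm hZint hpmeas hp hcond hg1 hint1
  have hz2 := aux_int_mul_sub_eq_zero hm hZint hpmeas hp hcond hg2 hint2
  constructor
  · have : (∫ ω, ((1 - D ω * (1 - Z ω) / (1 - p ω) - (1 - D ω) * Z ω / p ω)
        - D ω * (Z ω - p ω) / (p ω * (1 - p ω))) ∂μ) = 0 := by
      rw [integral_congr_ae hae1]; exact hz1
    rw [integral_sub hintκ hintκ1] at this
    linarith
  · have : (∫ ω, (D ω * (Z ω - p ω) / (p ω * (1 - p ω))
        - (1 - D ω) * ((1 - Z ω) - (1 - p ω)) / (p ω * (1 - p ω))) ∂μ) = 0 := by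
      rw [integral_congr_ae hae2]; exact hz2
    rw [integral_sub hintκ1 hintκ0] at this
    linarith
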